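/- Define g(x) = βN - μ - γ - βx - (σ²/2)(N - x)² for real x. If R₀ˢ := βN/(μ+γ) - σ²N²/(2(μ+γ)) < 1 and σ² ≤ β/N, then for all x ∈ (0, N), g(x) ≤ βN - μ - γ - σ²N²/2 < 0. -/
import Mathlib

open Real

theorem extinction_drift_bound_small_noise (β μ γ N σ : ℝ)
    (hβ : 0 ≤ β) (hμ : 0 ≤ μ) (hγ : 0 ≤ γ) (hμγ : 0 < μ + γ) (hN : 0 < N) (hσ : 0 < σ)
    (g : ℝ → ℝ) (hg : ∀ x, g x = β * N - μ - γ - β * x - σ ^ 2 / 2 * (N - x) ^ 2)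
    (hR : β * N / (μ + γ) - σ ^ 2 * N ^ 2 / (2 * (μ + γ)) < 1)
    (hσβ : σ ^ 2 ≤ β / N) :
    ∀ x ∈ Set.Ioo (0 : ℝ) N,
      g x ≤ β * N - μ - γ - σ ^ 2 * N ^ 2 / 2 ∧
      β * N - μ - γ - σ ^ 2 * N ^ 2 / 2 < 0 := by
  intro x ⟨hx0, hxN⟩
  have hb : σ ^ 2 * N ≤ β := (le_div_iff₀ hN).mp hσβ
  have hR' : β * N - σ ^ 2 * N ^ 2 / 2 < μ + γ := by
    have h : (β * N - σ ^ 2 * N ^ 2 / 2) / (μ + γ) < 1 := by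
      rw [sub_div, div_div] at *
      linarith
    calc β * N - σ ^ 2 * N ^ 2 / 2 = (β * N - σ ^ 2 * N ^ 2 / 2) / (μ + γ) * (μ + γ) := by
          field_simp
      _ < 1 * (μ + γ) := by exact mul_lt_mul_of_pos_right h hμγ
      _ = μ + γ := one_mul _
  refine ⟨?_, by linarith⟩
  rw [hg]
  nlinarith [mul_nonneg (sq_nonneg σ) (sq_nonneg x), mul_le_mul_of_nonneg_right hb hx0.le]
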